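/- arXiv:1506.07125 — 2 statements merged into one kernel-verified Lean document; each statement's English description precedes it below -/
import Mathlib

section
/- (Martingale Carleson Embedding Theorem, dyadic case) Let μ be a locally finite Borel measure on ℝ^n, let 𝒟 be the standard dyadic lattice, and let (w_Q)_{Q ∈ 𝒟} be nonnegative reals satisfying ∑_{Q ⊆ R, Q ∈ 𝒟} w_Q ≤ A·μ(R) for every R ∈ 𝒟. Then for every measurable f ≥ 0 and every p ∈ (1, ∞), ∑_{Q ∈ 𝒟} (⨍_Q f dμ)^p · w_Q ≤ (p')^p · A · ‖f‖_{L^p(μ)}^p, where p' = p/(p-1). -/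
open MeasureTheory ENNReal Set

/-- The dyadic cube of generation `k` at position `m` in `ℝⁿ`. -/
def dyadicCube (n : ℕ) (k : ℤ) (m : Fin n → ℤ) : Set (Fin n → ℝ) :=
  {x | ∀ i, (m i : ℝ) * (2 : ℝ) ^ (-k) ≤ x i ∧ x i < ((m i : ℝ) + 1) * (2 : ℝ) ^ (-k)}

/-- The average `⨍_Q f dμ`, interpreted as `0` when `μ Q = 0` or `μ Q = ∞`. -/
noncomputable def dyAvg {X : Type*} [MeasurableSpace X] (μ : Measure X)
    (f : X → ℝ≥0∞) (Q : Set X) : ℝ≥0∞ :=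
  if μ Q = 0 then 0 else (∫⁻ x in Q, f x ∂μ) / μ Q

/-!
Stopping-time argument. Restrict to a finite family `s` of dyadic cubes and let `M` be the
maximal function `M x = max {⨍_Q f dμ : Q ∈ s, x ∈ Q}`. Since dyadic cubes are nested or
disjoint, each level set `{M > t}` is the disjoint union of the maximal cubes `Q ∈ s` with
`⨍_Q f dμ > t`. The Carleson condition applied to these maximal cubes gives
`∑_{Q ∈ s, ⨍_Q f > t} w_Q ≤ A μ{M > t}`, and integrating against `p t^(p-1) dt` (layer cake)
gives `∑_{Q ∈ s} (⨍_Q f dμ)^p w_Q ≤ A ‖M‖ₚᵖ`. On the other hand the maximal cubes also give the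
localized weak-type bound `t μ{M > t} ≤ ∫_{M > t} f dμ`, which by the layer cake formula and
Hölder's inequality yields Doob's inequality `‖M‖ₚ ≤ p' ‖f‖ₚ`.
-/

lemma volume_setOf_ofReal_lt_inter_Ioi (r : ℝ≥0∞) :
    volume ({u : ℝ | ENNReal.ofReal u < r} ∩ Ioi 0) = r := by
  rcases eq_or_ne r ⊤ with rfl | hr
  · simp
  have : {u : ℝ | ENNReal.ofReal u < r} ∩ Ioi 0 = Ioo 0 r.toReal := by
    ext u
    simp only [mem_inter_iff, mem_ofPred_eq, mem_Ioi, mem_Ioo]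
    constructor
    · rintro ⟨hur, hu⟩
      exact ⟨hu, (ofReal_lt_iff_lt_toReal hu.le hr).1 hur⟩
    · rintro ⟨hu, hur⟩
      exact ⟨(ofReal_lt_iff_lt_toReal hu.le hr).2 hur, hu⟩
  rw [this, Real.volume_Ioo, sub_zero, ofReal_toReal hr]

lemma image_rpow_setOf_ofReal_lt_inter_Ioi {q : ℝ} (hq : 0 < q) (s : ℝ≥0∞) :
    (fun t : ℝ => t ^ q) '' ({t | ENNReal.ofReal t < s} ∩ Ioi 0) =
      {u | ENNReal.ofReal u < s ^ q} ∩ Ioi 0 := by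
  have key : ∀ t : ℝ, 0 < t → (ENNReal.ofReal t < s ↔ ENNReal.ofReal (t ^ q) < s ^ q) :=
    fun t ht => by rw [← ofReal_rpow_of_pos ht, rpow_lt_rpow_iff hq]
  ext u
  constructor
  · rintro ⟨t, ⟨hts, ht⟩, rfl⟩
    exact ⟨(key t ht).1 hts, Real.rpow_pos_of_pos ht q⟩
  · rintro ⟨hus, hu⟩
    have hu' : 0 < u ^ q⁻¹ := Real.rpow_pos_of_pos hu _
    refine ⟨u ^ q⁻¹, ⟨(key _ hu').2 ?_, hu'⟩, Real.rpow_inv_rpow hu.le hq.ne'⟩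
    rwa [Real.rpow_inv_rpow hu.le hq.ne']

/-- The substitution `u = t ^ q` maps `{t > 0 | t < s}` onto `{u > 0 | u < s ^ q}`. -/
lemma lintegral_Ioi_indicator_rpow {q : ℝ} (hq : 0 < q) (s : ℝ≥0∞) :
    ∫⁻ t in Ioi 0, {t : ℝ | ENNReal.ofReal t < s}.indicator
      (fun t => ENNReal.ofReal (q * t ^ (q - 1))) t = s ^ q := by
  have hE : MeasurableSet {t : ℝ | ENNReal.ofReal t < s} :=
    measurableSet_lt ENNReal.measurable_ofReal measurable_const
  rw [lintegral_indicator hE, Measure.restrict_restrict hE,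
    lintegral_deriv_eq_volume_image_of_monotoneOn (hE.inter measurableSet_Ioi)
      (fun t ht => (Real.hasDerivAt_rpow_const (Or.inl ht.2.ne')).hasDerivWithinAt)
      (fun a ha b _ hab => Real.rpow_le_rpow (le_of_lt ha.2) hab hq.le),
    image_rpow_setOf_ofReal_lt_inter_Ioi hq, volume_setOf_ofReal_lt_inter_Ioi]

lemma measurable_indicator_ofReal_lt (q : ℝ) (s : ℝ≥0∞) :
    Measurable ({t : ℝ | ENNReal.ofReal t < s}.indicator
      (fun t => ENNReal.ofReal (q * t ^ (q - 1)))) :=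
  (by fun_prop : Measurable fun t : ℝ => ENNReal.ofReal (q * t ^ (q - 1))).indicator
    (measurableSet_lt ENNReal.measurable_ofReal measurable_const)

lemma sum_rpow_mul_eq_lintegral_Ioi {ι : Type*} (s : Finset ι) (a w : ι → ℝ≥0∞) {q : ℝ}
    (hq : 0 < q) :
    ∑ i ∈ s, a i ^ q * w i = ∫⁻ t in Ioi 0, ENNReal.ofReal (q * t ^ (q - 1)) *
      ∑ i ∈ s with ENNReal.ofReal t < a i, w i := by
  simp_rw [← lintegral_Ioi_indicator_rpow hq, ← lintegral_mul_const _
    (measurable_indicator_ofReal_lt _ _)]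
  rw [← lintegral_finsetSum _ fun i _ => (measurable_indicator_ofReal_lt _ _).mul_const _]
  refine lintegral_congr fun t => ?_
  rw [Finset.sum_filter, Finset.mul_sum]
  refine Finset.sum_congr rfl fun i _ => ?_
  by_cases h : ENNReal.ofReal t < a i <;> simp [indicator, h]

section

variable {X : Type*} [MeasurableSpace X] {μ : Measure X}

theorem lintegral_mul_rpow_eq_lintegral_Ioi [SFinite μ] {f g : X → ℝ≥0∞} (hf : Measurable f)
    (hg : Measurable g) {q : ℝ} (hq : 0 < q) :
    ∫⁻ x, f x * g x ^ q ∂μ = ∫⁻ t in Ioi 0, ENNReal.ofReal (q * t ^ (q - 1)) *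
      ∫⁻ x in {x | ENNReal.ofReal t < g x}, f x ∂μ := by
  have hswap : ∀ (t : ℝ) (x : X), f x * {t | ENNReal.ofReal t < g x}.indicator
      (fun t => ENNReal.ofReal (q * t ^ (q - 1))) t =
      ENNReal.ofReal (q * t ^ (q - 1)) * {x | ENNReal.ofReal t < g x}.indicator f x := by
    intro t x
    by_cases h : ENNReal.ofReal t < g x <;> simp [indicator, h, mul_comm]
  calc ∫⁻ x, f x * g x ^ q ∂μ
      = ∫⁻ x, (∫⁻ t in Ioi 0, f x * {t | ENNReal.ofReal t < g x}.indicator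
          (fun t => ENNReal.ofReal (q * t ^ (q - 1))) t) ∂μ := by
        refine lintegral_congr fun x => ?_
        rw [lintegral_const_mul _ (measurable_indicator_ofReal_lt q _),
          lintegral_Ioi_indicator_rpow hq]
    _ = ∫⁻ t in Ioi 0, ∫⁻ x, ENNReal.ofReal (q * t ^ (q - 1)) *
          {x | ENNReal.ofReal t < g x}.indicator f x ∂μ := by
        simp_rw [hswap]
        refine lintegral_lintegral_swap (Measurable.aemeasurable ?_)
        exact (by fun_prop : Measurable fun z : X × ℝ => ENNReal.ofReal (q * z.2 ^ (q - 1))).mul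
          ((hf.comp measurable_fst).indicator
            (measurableSet_lt (ENNReal.measurable_ofReal.comp measurable_snd)
              (hg.comp measurable_fst)))
    _ = _ := by
        refine lintegral_congr fun t => ?_
        rw [lintegral_const_mul _ (hf.indicator (measurableSet_lt measurable_const hg)),
          lintegral_indicator (measurableSet_lt measurable_const hg)]

theorem lintegral_rpow_eq_lintegral_Ioi [SFinite μ] {g : X → ℝ≥0∞} (hg : Measurable g) {q : ℝ}
    (hq : 0 < q) :
    ∫⁻ x, g x ^ q ∂μ = ∫⁻ t in Ioi 0, ENNReal.ofReal (q * t ^ (q - 1)) *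
      μ {x | ENNReal.ofReal t < g x} := by
  simpa using lintegral_mul_rpow_eq_lintegral_Ioi (μ := μ) measurable_const hg hq (f := 1)

lemma ofReal_mul_rpow_sub_one_eq {p t : ℝ} (hp : 1 < p) (ht : 0 < t) :
    ENNReal.ofReal (p * t ^ (p - 1)) = ENNReal.ofReal (p / (p - 1)) *
      ENNReal.ofReal ((p - 1) * t ^ (p - 1 - 1)) * ENNReal.ofReal t := by
  rw [← ENNReal.ofReal_mul (by positivity), ← ENNReal.ofReal_mul (by positivity),
    Real.rpow_sub_one ht.ne' (p - 1)]
  congr 1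
  field_simp [(by linarith : p - 1 ≠ 0)]

theorem lintegral_rpow_le_of_mul_measure_le [SFinite μ] {f g : X → ℝ≥0∞} (hf : Measurable f)
    (hg : Measurable g) {p : ℝ} (hp : 1 < p)
    (hweak : ∀ t : ℝ, 0 < t → ENNReal.ofReal t * μ {x | ENNReal.ofReal t < g x} ≤
      ∫⁻ x in {x | ENNReal.ofReal t < g x}, f x ∂μ) :
    ∫⁻ x, g x ^ p ∂μ ≤ ENNReal.ofReal (p / (p - 1)) * ∫⁻ x, f x * g x ^ (p - 1) ∂μ := by
  rw [lintegral_rpow_eq_lintegral_Ioi hg (by linarith),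
    lintegral_mul_rpow_eq_lintegral_Ioi hf hg (by linarith),
    ← lintegral_const_mul' _ _ ofReal_ne_top]
  refine setLIntegral_mono' measurableSet_Ioi fun t ht => ?_
  rw [ofReal_mul_rpow_sub_one_eq hp ht, mul_assoc, mul_assoc]
  gcongr
  exact hweak t ht

/-- Hölder's inequality `∫ f g^(p-1) ≤ ‖f‖ₚ ‖g‖ₚ^(p-1)`, with the finite `‖g‖ₚ^(p-1)` divided
out. -/
theorem lintegral_rpow_le_of_le_mul_lintegral_mul_rpow {f g : X → ℝ≥0∞} (hf : AEMeasurable f μ)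
    (hg : AEMeasurable g μ) {p : ℝ} (hp : 1 < p) {c : ℝ≥0∞} (hg_fin : ∫⁻ x, g x ^ p ∂μ ≠ ⊤)
    (h : ∫⁻ x, g x ^ p ∂μ ≤ c * ∫⁻ x, f x * g x ^ (p - 1) ∂μ) :
    ∫⁻ x, g x ^ p ∂μ ≤ c ^ p * ∫⁻ x, f x ^ p ∂μ := by
  set Y := ∫⁻ x, g x ^ p ∂μ
  set F := ∫⁻ x, f x ^ p ∂μ
  have hpq : p.HolderConjugate (p / (p - 1)) :=
    (Real.holderConjugate_iff_eq_conjExponent hp).2 rfl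
  rcases eq_or_ne Y 0 with hY | hY
  · rw [hY]; exact zero_le
  have hY' : Y ^ (1 / (p / (p - 1))) ≠ 0 := by simp [hY, hg_fin]
  have hsplit : Y = Y ^ (1 / p) * Y ^ (1 / (p / (p - 1))) := by
    rw [← ENNReal.rpow_add _ _ hY hg_fin, hpq.one_div_add_one_div, div_one, ENNReal.rpow_one]
  have hroot : Y ^ (1 / p) ≤ c * F ^ (1 / p) := by
    rw [← ENNReal.mul_le_mul_iff_left hY' (by simp [hY, hg_fin]), ← hsplit, mul_assoc]
    exact h.trans (by
      gcongr; exact lintegral_mul_rpow_le_lintegral_rpow_mul_lintegral_rpow hpq hf hg)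
  calc Y = (Y ^ (1 / p)) ^ p := by
        rw [← ENNReal.rpow_mul, one_div_mul_cancel (by linarith), ENNReal.rpow_one]
    _ ≤ (c * F ^ (1 / p)) ^ p := ENNReal.rpow_le_rpow hroot (by linarith)
    _ = c ^ p * F := by
        rw [ENNReal.mul_rpow_of_nonneg _ _ (by linarith), ← ENNReal.rpow_mul,
          one_div_mul_cancel (by linarith), ENNReal.rpow_one]

lemma mul_measure_le_setLIntegral_of_lt_dyAvg {f : X → ℝ≥0∞} {Q : Set X} {τ : ℝ≥0∞}
    (h : τ < dyAvg μ f Q) : τ * μ Q ≤ ∫⁻ x in Q, f x ∂μ := by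
  unfold dyAvg at h
  split_ifs at h with hQ
  · exact absurd h ENNReal.not_lt_zero
  · exact (ENNReal.mul_lt_of_lt_div h).le

lemma dyAvg_ne_top {f : X → ℝ≥0∞} {Q : Set X} {p : ℝ} (hp : 1 ≤ p) (hQ : μ Q ≠ ⊤)
    (hf : ∫⁻ x in Q, f x ^ p ∂μ ≠ ⊤) : dyAvg μ f Q ≠ ⊤ := by
  unfold dyAvg
  split_ifs with hQ0
  · exact zero_ne_top
  have hle : ∀ x, f x ≤ 1 + f x ^ p := fun x => by
    rcases le_total (f x) 1 with h | h
    · exact le_add_right h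
    · exact le_add_left (le_rpow_self_of_one_le h hp)
  have hint : ∫⁻ x in Q, f x ∂μ ≤ μ Q + ∫⁻ x in Q, f x ^ p ∂μ := by
    calc _ ≤ ∫⁻ x in Q, (1 + f x ^ p) ∂μ := lintegral_mono hle
      _ = _ := by rw [lintegral_add_left measurable_const, setLIntegral_one]
  exact div_ne_top (ne_top_of_le_ne_top (add_ne_top.2 ⟨hQ, hf⟩) hint) hQ0

end

section Dyadic

variable {n : ℕ}

lemma dyadicCube_eq_pi (k : ℤ) (m : Fin n → ℤ) :
    dyadicCube n k m = univ.pi fun i => Ico ((m i : ℝ) * 2 ^ (-k)) ((m i + 1) * 2 ^ (-k)) := by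
  ext x
  simp [dyadicCube]

lemma measurableSet_dyadicCube (k : ℤ) (m : Fin n → ℤ) : MeasurableSet (dyadicCube n k m) := by
  rw [dyadicCube_eq_pi]
  exact MeasurableSet.univ_pi fun _ => measurableSet_Ico

lemma measure_dyadicCube_lt_top (μ : Measure (Fin n → ℝ)) [IsLocallyFiniteMeasure μ] (k : ℤ)
    (m : Fin n → ℤ) : μ (dyadicCube n k m) < ⊤ := by
  rw [dyadicCube_eq_pi]
  exact (measure_mono (pi_mono fun _ _ => Ico_subset_Icc_self)).trans_lt
    (isCompact_univ_pi fun _ => isCompact_Icc).measure_lt_top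

lemma mem_dyadicCube_iff {k : ℤ} {m : Fin n → ℤ} {x : Fin n → ℝ} :
    x ∈ dyadicCube n k m ↔ ∀ i, ⌊x i * 2 ^ k⌋ = m i := by
  have h2k : (0 : ℝ) < 2 ^ k := by positivity
  simp only [dyadicCube, mem_ofPred_eq, Int.floor_eq_iff, zpow_neg, ← div_eq_mul_inv,
    div_le_iff₀ h2k, lt_div_iff₀ h2k]

lemma floor_mul_zpow_eq_floor_div {k k' : ℤ} (hk : k' ≤ k) (z : ℝ) :
    ⌊z * 2 ^ k'⌋ = ⌊z * 2 ^ k⌋ / 2 ^ (k - k').toNat := by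
  have h : (2 : ℝ) ^ k = 2 ^ k' * ((2 ^ (k - k').toNat : ℕ) : ℝ) := by
    rw [Nat.cast_pow, Nat.cast_ofNat, ← zpow_natCast, Int.toNat_of_nonneg (by omega),
      ← zpow_add₀ two_ne_zero, add_sub_cancel]
  have h' : (2 : ℤ) ^ (k - k').toNat = ((2 ^ (k - k').toNat : ℕ) : ℤ) := by push_cast; rfl
  rw [h, ← mul_assoc, h', ← Int.floor_div_natCast, mul_div_cancel_right₀ _ (by positivity)]

lemma eq_of_mem_dyadicCube {k : ℤ} {m m' : Fin n → ℤ} {x : Fin n → ℝ}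
    (hx : x ∈ dyadicCube n k m) (hx' : x ∈ dyadicCube n k m') : m = m' := by
  rw [mem_dyadicCube_iff] at hx hx'
  exact funext fun i => (hx i).symm.trans (hx' i)

lemma dyadicCube_subset_of_mem {k k' : ℤ} {m m' : Fin n → ℤ} {x : Fin n → ℝ} (hk : k' ≤ k)
    (hx : x ∈ dyadicCube n k m) (hx' : x ∈ dyadicCube n k' m') :
    dyadicCube n k m ⊆ dyadicCube n k' m' := by
  intro y hy
  rw [mem_dyadicCube_iff] at hx hx' hy ⊢
  intro i
  rw [← hx' i, floor_mul_zpow_eq_floor_div hk, floor_mul_zpow_eq_floor_div hk, hx i, hy i]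

abbrev dyadicCubeOf (i : ℤ × (Fin n → ℤ)) : Set (Fin n → ℝ) := dyadicCube n i.1 i.2

/-- The cubes of a finite family meeting no strictly larger cube of the family are pairwise
disjoint and cover the family. -/
lemma exists_pairwiseDisjoint_dyadic_cover (S : Finset (ℤ × (Fin n → ℤ))) :
    ∃ M ⊆ S, (M : Set (ℤ × (Fin n → ℤ))).PairwiseDisjoint dyadicCubeOf ∧
      ∀ i ∈ S, ∃ j ∈ M, dyadicCubeOf i ⊆ dyadicCubeOf j := by
  classical
  refine ⟨{j ∈ S | ∀ j' ∈ S, j'.1 < j.1 → Disjoint (dyadicCubeOf j) (dyadicCubeOf j')},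
    Finset.filter_subset _ _, ?_, ?_⟩
  · intro j hj j' hj' hne
    simp only [Finset.coe_filter, mem_ofPred_eq] at hj hj'
    rcases lt_trichotomy j.1 j'.1 with hlt | heq | hgt
    · exact (hj'.2 j hj.1 hlt).symm
    · refine not_not.1 fun hmeet => hne ?_
      obtain ⟨x, hx, hx'⟩ := not_disjoint_iff.1 hmeet
      rw [dyadicCubeOf, heq] at hx
      exact Prod.ext heq (eq_of_mem_dyadicCube hx hx')
    · exact hj.2 j' hj'.1 hgt
  · intro i hi
    obtain ⟨j, hj, hmin⟩ := Finset.exists_min_image {j ∈ S | dyadicCubeOf i ⊆ dyadicCubeOf j}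
      Prod.fst ⟨i, Finset.mem_filter.2 ⟨hi, subset_rfl⟩⟩
    rw [Finset.mem_filter] at hj
    refine ⟨j, Finset.mem_filter.2 ⟨hj.1, fun j' hj' hlt => not_not.1 fun hmeet => ?_⟩, hj.2⟩
    obtain ⟨x, hx, hx'⟩ := not_disjoint_iff.1 hmeet
    have := hmin j' (Finset.mem_filter.2
      ⟨hj', hj.2.trans (dyadicCube_subset_of_mem hlt.le hx hx')⟩)
    omega

lemma biUnion_dyadicCubeOf_eq_of_cover {S M : Finset (ℤ × (Fin n → ℤ))} (hMS : M ⊆ S)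
    (hcover : ∀ i ∈ S, ∃ j ∈ M, dyadicCubeOf i ⊆ dyadicCubeOf j) :
    ⋃ j ∈ M, dyadicCubeOf j = ⋃ i ∈ S, dyadicCubeOf i :=
  (biUnion_subset_biUnion_left hMS).antisymm <| iUnion₂_subset fun i hi =>
    by obtain ⟨j, hj, hij⟩ := hcover i hi; exact hij.trans (subset_biUnion_of_mem hj)

variable (μ : Measure (Fin n → ℝ))

lemma sum_le_mul_measure_biUnion_of_carleson {w : ℤ × (Fin n → ℤ) → ℝ≥0∞} {A : ℝ≥0∞}
    (hw : ∀ R, ∑' i : {i // dyadicCubeOf i ⊆ dyadicCubeOf R}, w i ≤ A * μ (dyadicCubeOf R))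
    (S : Finset (ℤ × (Fin n → ℤ))) :
    ∑ i ∈ S, w i ≤ A * μ (⋃ i ∈ S, dyadicCubeOf i) := by
  classical
  obtain ⟨M, hMS, hdisj, hcover⟩ := exists_pairwiseDisjoint_dyadic_cover S
  set below : ℤ × (Fin n → ℤ) → Set (ℤ × (Fin n → ℤ)) :=
    fun j => {i | dyadicCubeOf i ⊆ dyadicCubeOf j}
  calc ∑ i ∈ S, w i ≤ ∑ i ∈ S, ∑ j ∈ M, (below j).indicator w i := by
        refine Finset.sum_le_sum fun i hi => ?_
        obtain ⟨j, hj, hij⟩ := hcover i hi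
        calc w i = (below j).indicator w i := (indicator_of_mem hij w).symm
          _ ≤ _ := Finset.single_le_sum (f := fun j => (below j).indicator w i)
              (fun _ _ => zero_le) hj
    _ = ∑ j ∈ M, ∑ i ∈ S, (below j).indicator w i := Finset.sum_comm
    _ ≤ ∑ j ∈ M, ∑' i : {i // dyadicCubeOf i ⊆ dyadicCubeOf j}, w i :=
        Finset.sum_le_sum fun j _ =>
          (ENNReal.sum_le_tsum S).trans_eq (tsum_subtype (below j) w).symm
    _ ≤ ∑ j ∈ M, A * μ (dyadicCubeOf j) := Finset.sum_le_sum fun j _ => hw j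
    _ = A * μ (⋃ i ∈ S, dyadicCubeOf i) := by
        rw [← Finset.mul_sum, ← biUnion_dyadicCubeOf_eq_of_cover hMS hcover,
          measure_biUnion_finset hdisj fun j _ => measurableSet_dyadicCube _ _]

lemma mul_measure_biUnion_le_setLIntegral {f : (Fin n → ℝ) → ℝ≥0∞} {τ : ℝ≥0∞}
    {S : Finset (ℤ × (Fin n → ℤ))} (hS : ∀ i ∈ S, τ < dyAvg μ f (dyadicCubeOf i)) :
    τ * μ (⋃ i ∈ S, dyadicCubeOf i) ≤ ∫⁻ x in ⋃ i ∈ S, dyadicCubeOf i, f x ∂μ := by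
  obtain ⟨M, hMS, hdisj, hcover⟩ := exists_pairwiseDisjoint_dyadic_cover S
  have hmeas : ∀ j ∈ M, MeasurableSet (dyadicCubeOf j) :=
    fun _ _ => measurableSet_dyadicCube _ _
  rw [← biUnion_dyadicCubeOf_eq_of_cover hMS hcover, measure_biUnion_finset hdisj hmeas,
    lintegral_biUnion_finset hdisj hmeas, Finset.mul_sum]
  exact Finset.sum_le_sum fun j hj => mul_measure_le_setLIntegral_of_lt_dyAvg (hS j (hMS hj))

variable (f : (Fin n → ℝ) → ℝ≥0∞)

/-- Taking the maximum over a finite family `s` keeps the maximal function bounded and supported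
on a set of finite measure, so `‖M‖ₚ < ∞` as soon as `‖f‖ₚ < ∞`. -/
noncomputable def dyadicMaximal (s : Finset (ℤ × (Fin n → ℤ))) (x : Fin n → ℝ) : ℝ≥0∞ :=
  ⨆ i ∈ s, (dyadicCubeOf i).indicator (fun _ => dyAvg μ f (dyadicCubeOf i)) x

lemma measurable_dyadicMaximal (s : Finset (ℤ × (Fin n → ℤ))) :
    Measurable (dyadicMaximal μ f s) :=
  Measurable.biSup _ s.countable_toSet fun _ _ =>
    measurable_const.indicator (measurableSet_dyadicCube _ _)

lemma setOf_lt_dyadicMaximal (s : Finset (ℤ × (Fin n → ℤ))) (τ : ℝ≥0∞) :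
    {x | τ < dyadicMaximal μ f s x} =
      ⋃ i ∈ {i ∈ s | τ < dyAvg μ f (dyadicCubeOf i)}, dyadicCubeOf i := by
  ext x
  simp only [dyadicMaximal, mem_ofPred_eq, lt_iSup_iff, mem_iUnion, Finset.mem_filter,
    exists_prop]
  refine exists_congr fun i => ?_
  by_cases hx : x ∈ dyadicCubeOf i <;> simp [hx, and_comm]

lemma dyadicMaximal_le_indicator (s : Finset (ℤ × (Fin n → ℤ))) (x : Fin n → ℝ) :
    dyadicMaximal μ f s x ≤
      (⋃ i ∈ s, dyadicCubeOf i).indicator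
        (fun _ => s.sup fun i => dyAvg μ f (dyadicCubeOf i)) x := by
  refine iSup₂_le fun i hi => ?_
  by_cases hx : x ∈ dyadicCubeOf i
  · rw [indicator_of_mem hx, indicator_of_mem (mem_iUnion₂.2 ⟨i, hi, hx⟩)]
    exact Finset.le_sup (f := fun i => dyAvg μ f (dyadicCubeOf i)) hi
  · rw [indicator_of_notMem hx]
    exact zero_le

variable [IsLocallyFiniteMeasure μ]

lemma lintegral_dyadicMaximal_rpow_ne_top {p : ℝ} (hp : 1 ≤ p) (hf : ∫⁻ x, f x ^ p ∂μ ≠ ⊤)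
    (s : Finset (ℤ × (Fin n → ℤ))) : ∫⁻ x, dyadicMaximal μ f s x ^ p ∂μ ≠ ⊤ := by
  set C := s.sup fun i => dyAvg μ f (dyadicCubeOf i)
  have hC : C ≠ ⊤ := by
    refine (Finset.sup_lt_iff bot_lt_top).2 (fun i _ => ?_) |>.ne
    exact (dyAvg_ne_top hp (measure_dyadicCube_lt_top μ _ _).ne
      (ne_top_of_le_ne_top hf (setLIntegral_le_lintegral _ _))).lt_top
  have hU : μ (⋃ i ∈ s, dyadicCubeOf i) ≠ ⊤ := (measure_biUnion_finset_le s _).trans_lt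
    (ENNReal.sum_lt_top.2 fun i _ => measure_dyadicCube_lt_top μ _ _) |>.ne
  have hpt : ∀ x, dyadicMaximal μ f s x ^ p ≤
      (⋃ i ∈ s, dyadicCubeOf i).indicator (fun _ => C ^ p) x := fun x => by
    refine (ENNReal.rpow_le_rpow (dyadicMaximal_le_indicator μ f s x) (by linarith)).trans_eq ?_
    by_cases hx : x ∈ ⋃ i ∈ s, dyadicCubeOf i
    · rw [indicator_of_mem hx, indicator_of_mem hx]
    · rw [indicator_of_notMem hx, indicator_of_notMem hx, zero_rpow_of_pos (by linarith)]
  refine ne_top_of_le_ne_top ?_ (lintegral_mono hpt)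
  rw [lintegral_indicator_const (Finset.measurableSet_biUnion s
    fun _ _ => measurableSet_dyadicCube _ _)]
  exact mul_ne_top (rpow_ne_top_of_nonneg (by linarith) hC) hU

theorem lintegral_dyadicMaximal_rpow_le (hf : Measurable f) {p : ℝ} (hp : 1 < p)
    (s : Finset (ℤ × (Fin n → ℤ))) :
    ∫⁻ x, dyadicMaximal μ f s x ^ p ∂μ ≤
      ENNReal.ofReal ((p / (p - 1)) ^ p) * ∫⁻ x, f x ^ p ∂μ := by
  have hp' : 0 < p / (p - 1) := div_pos (by linarith) (by linarith)
  rcases eq_or_ne (∫⁻ x, f x ^ p ∂μ) ⊤ with hF | hF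
  · rw [hF, mul_top (ofReal_pos.2 (Real.rpow_pos_of_pos hp' p)).ne']
    exact le_top
  have hM := measurable_dyadicMaximal μ f s
  rw [← ofReal_rpow_of_nonneg hp'.le (by linarith)]
  refine lintegral_rpow_le_of_le_mul_lintegral_mul_rpow hf.aemeasurable hM.aemeasurable hp
    (lintegral_dyadicMaximal_rpow_ne_top μ f hp.le hF s) ?_
  refine lintegral_rpow_le_of_mul_measure_le hf hM hp fun t _ => ?_
  rw [setOf_lt_dyadicMaximal]
  exact mul_measure_biUnion_le_setLIntegral μ fun i hi => (Finset.mem_filter.1 hi).2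

theorem sum_dyAvg_rpow_mul_le {w : ℤ × (Fin n → ℤ) → ℝ≥0∞} {A : ℝ≥0∞}
    (hw : ∀ R, ∑' i : {i // dyadicCubeOf i ⊆ dyadicCubeOf R}, w i ≤ A * μ (dyadicCubeOf R))
    {p : ℝ} (hp : 0 < p) (s : Finset (ℤ × (Fin n → ℤ))) :
    ∑ i ∈ s, dyAvg μ f (dyadicCubeOf i) ^ p * w i ≤ A * ∫⁻ x, dyadicMaximal μ f s x ^ p ∂μ := by
  have hlevel : Antitone fun t : ℝ => μ {x | ENNReal.ofReal t < dyadicMaximal μ f s x} :=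
    fun a b hab => measure_mono fun x hx => (ofReal_le_ofReal hab).trans_lt hx
  have hmeas : Measurable fun t : ℝ => ENNReal.ofReal (p * t ^ (p - 1)) *
      μ {x | ENNReal.ofReal t < dyadicMaximal μ f s x} :=
    (by fun_prop : Measurable fun t : ℝ => ENNReal.ofReal (p * t ^ (p - 1))).mul hlevel.measurable
  rw [sum_rpow_mul_eq_lintegral_Ioi _ _ _ hp, lintegral_rpow_eq_lintegral_Ioi
    (measurable_dyadicMaximal μ f s) hp, ← lintegral_const_mul _ hmeas]
  refine lintegral_mono fun t => ?_
  rw [mul_left_comm, setOf_lt_dyadicMaximal]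
  gcongr
  exact sum_le_mul_measure_biUnion_of_carleson μ hw _

end Dyadic

/-- Martingale Carleson Embedding Theorem for the standard dyadic lattice in `ℝⁿ`:
if `∑_{Q ⊆ R} w_Q ≤ A μ(R)` for every dyadic cube `R`, then for every measurable `f ≥ 0`
and every `p ∈ (1,∞)`,
`∑_Q (⨍_Q f dμ)^p w_Q ≤ (p')^p A ‖f‖_{L^p(μ)}^p` where `p' = p/(p-1)`. -/
theorem martingale_carleson_embedding {n : ℕ} (μ : Measure (Fin n → ℝ))
    [IsLocallyFiniteMeasure μ]
    (w : ℤ × (Fin n → ℤ) → ℝ≥0∞) (A : ℝ≥0∞)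
    (hw : ∀ (k : ℤ) (m : Fin n → ℤ),
      (∑' i : {i : ℤ × (Fin n → ℤ) // dyadicCube n i.1 i.2 ⊆ dyadicCube n k m}, w i) ≤
        A * μ (dyadicCube n k m))
    (f : (Fin n → ℝ) → ℝ≥0∞) (hf : Measurable f) (p : ℝ) (hp : 1 < p) :
    (∑' i : ℤ × (Fin n → ℤ), dyAvg μ f (dyadicCube n i.1 i.2) ^ p * w i) ≤
      ENNReal.ofReal ((p / (p - 1)) ^ p) * A * ∫⁻ x, f x ^ p ∂μ := by
  rw [ENNReal.tsum_eq_iSup_sum, mul_right_comm]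
  refine iSup_le fun s => ?_
  calc ∑ i ∈ s, dyAvg μ f (dyadicCubeOf i) ^ p * w i
      ≤ A * ∫⁻ x, dyadicMaximal μ f s x ^ p ∂μ :=
        sum_dyAvg_rpow_mul_le μ f (fun R => hw R.1 R.2) (by linarith) s
    _ ≤ A * (ENNReal.ofReal ((p / (p - 1)) ^ p) * ∫⁻ x, f x ^ p ∂μ) := by
        gcongr
        exact lintegral_dyadicMaximal_rpow_le μ f hf hp s
    _ = _ := by ring
end

section
/- With the stopping cube construction: let μ be a locally finite Borel measure on ℝ^n, f ≥ 0 locally μ-integrable, r > 1, and let 𝒢 be the collection of stopping cubes constructed by iterating the stopping rule (each generation consists of the maximal dyadic subcubes R of a previous-generation cube Q with ⨍_R f dμ ≥ r·⨍_Q f dμ, starting from a fixed top cube Q_0). Then for every dyadic cube Q ⊆ Q_0, ∑_{R ∈ 𝒢, R ⊆ Q} μ(R) ≤ (r/(r-1)) · μ(Q). -/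
open MeasureTheory ENNReal Set

/-- A set is a dyadic cube. -/
def IsDyadic (n : ℕ) (S : Set (Fin n → ℝ)) : Prop :=
  ∃ k m, S = dyadicCube n k m

/-- `𝒢*(Q)`: the collection of maximal dyadic subcubes `R ⊆ Q` with
`⨍_R f dμ ≥ r ⨍_Q f dμ`. -/
def stoppingCubes {n : ℕ} (μ : Measure (Fin n → ℝ)) (f : (Fin n → ℝ) → ℝ≥0∞)
    (r : ℝ) (Q : Set (Fin n → ℝ)) : Set (Set (Fin n → ℝ)) :=
  {R | IsDyadic n R ∧ R ⊆ Q ∧ ENNReal.ofReal r * dyAvg μ f Q ≤ dyAvg μ f R ∧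
    ∀ R', IsDyadic n R' → R' ⊆ Q → R ⊆ R' →
      ENNReal.ofReal r * dyAvg μ f Q ≤ dyAvg μ f R' → R' = R}

/-- The generations of stopping cubes starting from a top cube `Q₀`. -/
def generations {n : ℕ} (μ : Measure (Fin n → ℝ)) (f : (Fin n → ℝ) → ℝ≥0∞)
    (r : ℝ) (Q₀ : Set (Fin n → ℝ)) : ℕ → Set (Set (Fin n → ℝ))
  | 0 => {Q₀}
  | j + 1 => {R | ∃ Q ∈ generations μ f r Q₀ j, R ∈ stoppingCubes μ f r Q}

/-- The full family of stopping cubes generated from the top cube `Q₀`. -/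
def stoppingFamily {n : ℕ} (μ : Measure (Fin n → ℝ)) (f : (Fin n → ℝ) → ℝ≥0∞)
    (r : ℝ) (Q₀ : Set (Fin n → ℝ)) : Set (Set (Fin n → ℝ)) :=
  ⋃ j, generations μ f r Q₀ j

/-! Write `C = r / (r - 1)`, so that `C = 1 + C / r`. By induction on `N`, the cubes of the first
`N` generations started at a dyadic cube `P` that lie in a measurable set `Q` have total measure
at most `C μ(Q ∩ P)`. If `P ⊄ Q`, apply the induction hypothesis to the stopping cubes of `P`,
which are disjoint subsets of `P`. If `P ⊆ Q`, each stopping cube `S` of `P` carries at least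
`r ⨍_P f · μ(S)` of the integral of `f` over `P`, so together they have measure at most
`μ(P) / r`, and the total is at most `μ(P) + C μ(P) / r = C μ(P)`. A cube whose average is `0` or
`∞` is its own unique stopping cube, so it generates nothing new. -/

theorem ENNReal.tsum_iUnion_le_of_directed {α ι : Type*} [Nonempty ι] (g : α → ℝ≥0∞)
    {s : ι → Set α} (hs : Directed (· ⊆ ·) s) {c : ℝ≥0∞} (h : ∀ i, ∑' a : s i, g a ≤ c) :
    ∑' a : ⋃ i, s i, g a ≤ c := by
  rw [ENNReal.tsum_eq_iSup_sum]
  refine iSup_le fun t => ?_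
  obtain ⟨i, hi⟩ := hs.exists_mem_subset_of_finset_subset_biUnion
    (s := t.map (Function.Embedding.subtype _)) fun _ ha => by
      obtain ⟨a, -, rfl⟩ := Finset.mem_map.1 ha
      exact a.2
  calc ∑ a ∈ t, g a = ∑' a : ↑(t.map (Function.Embedding.subtype _)), g a := by
        rw [Finset.tsum_subtype, Finset.sum_map]; rfl
    _ ≤ ∑' a : s i, g a := ENNReal.tsum_mono_subtype g hi
    _ ≤ c := h i

theorem add_ofReal_div_sub_one_mul_le {r : ℝ} (hr : 1 < r) {x y : ℝ≥0∞}
    (h : ENNReal.ofReal r * x ≤ y) :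
    y + ENNReal.ofReal (r / (r - 1)) * x ≤ ENNReal.ofReal (r / (r - 1)) * y := by
  have hr' : 0 < r - 1 := sub_pos.2 hr
  calc y + ENNReal.ofReal (r / (r - 1)) * x
      = y + ENNReal.ofReal (1 / (r - 1)) * (ENNReal.ofReal r * x) := by
        rw [← mul_assoc, ← ENNReal.ofReal_mul (by positivity), one_div_mul_eq_div]
    _ ≤ y + ENNReal.ofReal (1 / (r - 1)) * y := by gcongr
    _ = ENNReal.ofReal (1 + 1 / (r - 1)) * y := by
        rw [ENNReal.ofReal_add zero_le_one (by positivity), ENNReal.ofReal_one, add_mul, one_mul]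
    _ = ENNReal.ofReal (r / (r - 1)) * y := by
        congr 2
        field_simp
        ring

theorem floor_mul_two_zpow_eq (x : ℝ) (k : ℤ) (d : ℕ) :
    ⌊x * 2 ^ k⌋ = ⌊x * 2 ^ (k + d)⌋ / 2 ^ d := by
  have h : x * 2 ^ k = x * 2 ^ (k + d) / (2 ^ d : ℕ) := by
    rw [zpow_add₀ two_ne_zero, zpow_natCast]
    push_cast
    field_simp
  rw [h, Int.floor_div_natCast]
  push_cast
  rfl

theorem mem_dyadicCube {n : ℕ} {k : ℤ} {m : Fin n → ℤ} {x : Fin n → ℝ} :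
    x ∈ dyadicCube n k m ↔ ∀ i, ⌊x i * 2 ^ k⌋ = m i := by
  refine forall_congr' fun i => ?_
  have h2 : (0 : ℝ) < 2 ^ k := by positivity
  rw [Int.floor_eq_iff, zpow_neg, ← div_eq_mul_inv, ← div_eq_mul_inv, div_le_iff₀ h2,
    lt_div_iff₀ h2]

theorem dyadicCube_subset_of_le {n : ℕ} {k k' : ℤ} {m m' : Fin n → ℤ} {x : Fin n → ℝ}
    (hk : k ≤ k') (hx : x ∈ dyadicCube n k m) (hx' : x ∈ dyadicCube n k' m') :
    dyadicCube n k' m' ⊆ dyadicCube n k m := by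
  obtain ⟨d, rfl⟩ := Int.le.dest hk
  intro y hy
  rw [mem_dyadicCube] at hx hx' hy ⊢
  intro i
  rw [← hx i, floor_mul_two_zpow_eq _ k d, floor_mul_two_zpow_eq (x i) k d, hy i, hx' i]

namespace IsDyadic

variable {n : ℕ} {S T : Set (Fin n → ℝ)}

theorem subset_or_subset_of_not_disjoint (hS : IsDyadic n S) (hT : IsDyadic n T)
    (h : ¬Disjoint S T) : S ⊆ T ∨ T ⊆ S := by
  obtain ⟨k, m, rfl⟩ := hS
  obtain ⟨k', m', rfl⟩ := hT
  obtain ⟨x, hx, hx'⟩ := Set.not_disjoint_iff.1 h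
  rcases le_total k k' with hkk' | hkk'
  · exact Or.inr (dyadicCube_subset_of_le hkk' hx hx')
  · exact Or.inl (dyadicCube_subset_of_le hkk' hx' hx)

theorem measurableSet (hS : IsDyadic n S) : MeasurableSet S := by
  obtain ⟨k, m, rfl⟩ := hS
  have : dyadicCube n k m =
      univ.pi fun i => Ico ((m i : ℝ) * 2 ^ (-k)) ((m i + 1) * 2 ^ (-k)) := by
    ext x
    simp [dyadicCube]
  rw [this]
  exact MeasurableSet.univ_pi fun i => measurableSet_Ico

end IsDyadic

theorem countable_setOf_isDyadic (n : ℕ) : {S : Set (Fin n → ℝ) | IsDyadic n S}.Countable :=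
  (countable_range fun p : ℤ × (Fin n → ℤ) => dyadicCube n p.1 p.2).mono
    (by rintro _ ⟨k, m, rfl⟩; exact ⟨(k, m), rfl⟩)

section Average

variable {X : Type*} [MeasurableSpace X] {μ : Measure X} {f : X → ℝ≥0∞} {s : Set X}

theorem dyAvg_of_measure_eq_top (hs : μ s = ⊤) : dyAvg μ f s = 0 := by
  simp [dyAvg, hs]

theorem dyAvg_mul_measure (hs : μ s ≠ ⊤) : dyAvg μ f s * μ s = ∫⁻ x in s, f x ∂μ := by
  unfold dyAvg
  split_ifs with h0
  · rw [zero_mul, setLIntegral_measure_zero s f h0]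
  · exact ENNReal.div_mul_cancel h0 hs

theorem dyAvg_mul_measure_le : dyAvg μ f s * μ s ≤ ∫⁻ x in s, f x ∂μ := by
  by_cases hs : μ s = ⊤
  · simp [dyAvg_of_measure_eq_top hs]
  · exact (dyAvg_mul_measure hs).le

end Average

section Stopping

variable {n : ℕ} {μ : Measure (Fin n → ℝ)} {f : (Fin n → ℝ) → ℝ≥0∞} {r : ℝ}
  {P : Set (Fin n → ℝ)}

theorem stoppingCubes_pairwiseDisjoint : (stoppingCubes μ f r P).PairwiseDisjoint id := by
  intro R₁ h₁ R₂ h₂ hne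
  by_contra hint
  rcases h₁.1.subset_or_subset_of_not_disjoint h₂.1 hint with h | h
  · exact hne (h₁.2.2.2 R₂ h₂.1 h₂.2.1 h h₂.2.2.1).symm
  · exact hne (h₂.2.2.2 R₁ h₁.1 h₁.2.1 h h₁.2.2.1)

theorem stoppingCubes_countable : (stoppingCubes μ f r P).Countable :=
  (countable_setOf_isDyadic n).mono fun _ hR => hR.1

theorem ofReal_mul_tsum_measure_stoppingCubes_le (h0 : dyAvg μ f P ≠ 0)
    (htop : dyAvg μ f P ≠ ⊤) :
    ENNReal.ofReal r * ∑' S : stoppingCubes μ f r P, μ S ≤ μ P := by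
  have := (stoppingCubes_countable (μ := μ) (f := f) (r := r) (P := P)).to_subtype
  have hP : μ P ≠ ⊤ := fun h => h0 (dyAvg_of_measure_eq_top h)
  refine (ENNReal.mul_le_mul_iff_right h0 htop).1 ?_
  calc dyAvg μ f P * (ENNReal.ofReal r * ∑' S : stoppingCubes μ f r P, μ S)
      = ∑' S : stoppingCubes μ f r P, ENNReal.ofReal r * dyAvg μ f P * μ S := by
        rw [← mul_assoc, mul_comm (dyAvg μ f P), ENNReal.tsum_mul_left]
    _ ≤ ∑' S : stoppingCubes μ f r P, ∫⁻ x in S, f x ∂μ :=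
        ENNReal.tsum_le_tsum fun S =>
          (mul_le_mul_left S.2.2.2.1 _).trans dyAvg_mul_measure_le
    _ = ∫⁻ x in ⋃ S : stoppingCubes μ f r P, S, f x ∂μ :=
        (lintegral_iUnion (fun S => S.2.1.measurableSet)
          stoppingCubes_pairwiseDisjoint.subtype f).symm
    _ ≤ ∫⁻ x in P, f x ∂μ := lintegral_mono_set (iUnion_subset fun S => S.2.2.1)
    _ = dyAvg μ f P * μ P := (dyAvg_mul_measure hP).symm

theorem stoppingCubes_eq_singleton (hP : IsDyadic n P) (hr : 0 < r)
    (h : dyAvg μ f P = 0 ∨ dyAvg μ f P = ⊤) : stoppingCubes μ f r P = {P} := by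
  have hself : P ∈ stoppingCubes μ f r P := by
    refine ⟨hP, subset_rfl, ?_, fun R' _ hR'P hPR' _ => hR'P.antisymm hPR'⟩
    rcases h with h | h
    · rw [h, mul_zero]
    · rw [h, ENNReal.mul_top (ENNReal.ofReal_pos.2 hr).ne']
  refine eq_singleton_iff_unique_mem.2 ⟨hself, fun R hR => ?_⟩
  exact (hR.2.2.2 P hP subset_rfl hR.2.1 hself.2.2.1).symm

end Stopping

section Generations

variable {n : ℕ} {μ : Measure (Fin n → ℝ)} {f : (Fin n → ℝ) → ℝ≥0∞} {r : ℝ}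

theorem generations_succ_eq_biUnion (P : Set (Fin n → ℝ)) (j : ℕ) :
    generations μ f r P (j + 1) = ⋃ S ∈ stoppingCubes μ f r P, generations μ f r S j := by
  induction j with
  | zero => ext R; simp [generations]
  | succ j ih =>
    ext R
    simp only [generations] at ih ⊢
    simp only [ih, mem_ofPred_eq, mem_iUnion]
    tauto

theorem generations_eq_singleton {P : Set (Fin n → ℝ)} (h : stoppingCubes μ f r P = {P})
    (j : ℕ) : generations μ f r P j = {P} := by
  induction j with
  | zero => rfl
  | succ j ih => rw [generations_succ_eq_biUnion, h, biUnion_singleton, ih]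

theorem biUnion_generations_lt_succ (P : Set (Fin n → ℝ)) (N : ℕ) :
    ⋃ j < N + 1, generations μ f r P j =
      insert P (⋃ S ∈ stoppingCubes μ f r P, ⋃ j < N, generations μ f r S j) := by
  simp_rw [biUnion_lt_succ', generations_succ_eq_biUnion]
  rw [iUnion₂_comm]
  rfl

theorem biUnion_generations_lt_subset_singleton {P : Set (Fin n → ℝ)} (hP : IsDyadic n P)
    (hr : 0 < r) (hdeg : dyAvg μ f P = 0 ∨ dyAvg μ f P = ⊤) (N : ℕ) :
    ⋃ j < N, generations μ f r P j ⊆ {P} := by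
  simp only [generations_eq_singleton (stoppingCubes_eq_singleton hP hr hdeg)]
  exact iUnion₂_subset fun _ _ => subset_rfl

end Generations

section Packing

variable {n : ℕ} {μ : Measure (Fin n → ℝ)} {f : (Fin n → ℝ) → ℝ≥0∞} {r : ℝ}

theorem tsum_measure_inter_stoppingCubes_le {P Q : Set (Fin n → ℝ)} (hQ : MeasurableSet Q) :
    ∑' S : stoppingCubes μ f r P, μ (Q ∩ S) ≤ μ (Q ∩ P) := by
  have := (stoppingCubes_countable (μ := μ) (f := f) (r := r) (P := P)).to_subtype
  have hdisj : Pairwise (Function.onFun Disjoint fun S : stoppingCubes μ f r P => Q ∩ S) :=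
    fun S T hST => (stoppingCubes_pairwiseDisjoint.subtype _ _ hST).mono
      inter_subset_right inter_subset_right
  rw [← measure_iUnion hdisj fun S => hQ.inter S.2.1.measurableSet]
  exact measure_mono (iUnion_subset fun S => inter_subset_inter_right Q S.2.2.1)

theorem tsum_measure_generations_lt_le (hr : 1 < r) {Q : Set (Fin n → ℝ)}
    (hQ : MeasurableSet Q) (N : ℕ) {P : Set (Fin n → ℝ)} (hP : IsDyadic n P) :
    ∑' R : ↥((⋃ j < N, generations μ f r P j) ∩ 𝒫 Q), μ R ≤
      ENNReal.ofReal (r / (r - 1)) * μ (Q ∩ P) := by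
  induction N generalizing P with
  | zero => simp
  | succ N ih =>
    have hchildren :
        ∑' R : ↥((⋃ S ∈ stoppingCubes μ f r P, ⋃ j < N, generations μ f r S j) ∩ 𝒫 Q), μ R ≤
          ENNReal.ofReal (r / (r - 1)) * ∑' S : stoppingCubes μ f r P, μ (Q ∩ S) := by
      rw [iUnion₂_inter, ← ENNReal.tsum_mul_left]
      exact (ENNReal.tsum_biUnion_le_tsum _ _ _).trans
        (ENNReal.tsum_le_tsum fun S => ih S.2.1)
    by_cases hPQ : P ⊆ Q
    swap
    · rw [biUnion_generations_lt_succ, insert_inter_of_notMem hPQ]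
      exact hchildren.trans (by gcongr; exact tsum_measure_inter_stoppingCubes_le hQ)
    rw [inter_eq_self_of_subset_right hPQ]
    by_cases hdeg : dyAvg μ f P = 0 ∨ dyAvg μ f P = ⊤
    · calc _ ≤ ∑' R : ↥({P} : Set (Set (Fin n → ℝ))), μ R :=
            ENNReal.tsum_mono_subtype _ (inter_subset_left.trans
              (biUnion_generations_lt_subset_singleton hP (by linarith) hdeg _))
        _ = μ P := tsum_singleton P _
        _ ≤ ENNReal.ofReal (r / (r - 1)) * μ P :=
          le_mul_of_one_le_left zero_le
            (ENNReal.one_le_ofReal.2 ((one_le_div (by linarith)).2 (by linarith)))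
    rw [not_or] at hdeg
    rw [biUnion_generations_lt_succ, insert_inter_of_mem hPQ, insert_eq]
    calc _ ≤ _ := ENNReal.tsum_union_le _ _ _
      _ ≤ μ P + ENNReal.ofReal (r / (r - 1)) * ∑' S : stoppingCubes μ f r P, μ (Q ∩ S) := by
        rw [tsum_singleton P]
        gcongr
      _ ≤ μ P + ENNReal.ofReal (r / (r - 1)) * ∑' S : stoppingCubes μ f r P, μ S := by
        gcongr
        exact inter_subset_right
      _ ≤ ENNReal.ofReal (r / (r - 1)) * μ P :=
        add_ofReal_div_sub_one_mul_le hr (ofReal_mul_tsum_measure_stoppingCubes_le hdeg.1 hdeg.2)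

end Packing

theorem stoppingFamily_carleson_general {n : ℕ} (μ : Measure (Fin n → ℝ))
    (f : (Fin n → ℝ) → ℝ≥0∞)
    (r : ℝ) (hr : 1 < r)
    (Q₀ : Set (Fin n → ℝ)) (hQ₀ : IsDyadic n Q₀)
    (Q : Set (Fin n → ℝ)) (hQ : IsDyadic n Q) :
    (∑' R : {R : Set (Fin n → ℝ) // R ∈ stoppingFamily μ f r Q₀ ∧ R ⊆ Q},
        μ (R : Set (Fin n → ℝ))) ≤ ENNReal.ofReal (r / (r - 1)) * μ Q := by
  have hfamily : stoppingFamily μ f r Q₀ ∩ 𝒫 Q =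
      ⋃ N, (⋃ j < N, generations μ f r Q₀ j) ∩ 𝒫 Q := by
    rw [← iUnion_inter, biUnion_lt_eq_iUnion]
    rfl
  have hmono : Monotone fun N => (⋃ j < N, generations μ f r Q₀ j) ∩ 𝒫 Q :=
    fun _ _ hN => inter_subset_inter_left _
      (biUnion_mono (fun _ hj => lt_of_lt_of_le hj hN) fun _ _ => subset_rfl)
  calc _ = ∑' R : ↥(stoppingFamily μ f r Q₀ ∩ 𝒫 Q), μ R := rfl
    _ ≤ ENNReal.ofReal (r / (r - 1)) * μ (Q ∩ Q₀) := by
      rw [hfamily]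
      exact ENNReal.tsum_iUnion_le_of_directed _ hmono.directed_le
        fun N => tsum_measure_generations_lt_le hr hQ.measurableSet N hQ₀
    _ ≤ ENNReal.ofReal (r / (r - 1)) * μ Q := by gcongr; exact inter_subset_left

/-- Carleson packing condition for the stopping family: for every dyadic cube `Q ⊆ Q₀`,
`∑_{R ∈ 𝒢, R ⊆ Q} μ(R) ≤ (r/(r-1)) μ(Q)`. -/
theorem stoppingFamily_carleson {n : ℕ} (μ : Measure (Fin n → ℝ))
    [IsLocallyFiniteMeasure μ]
    (f : (Fin n → ℝ) → ℝ≥0∞) (hf : Measurable f)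
    (r : ℝ) (hr : 1 < r)
    (Q₀ : Set (Fin n → ℝ)) (hQ₀ : IsDyadic n Q₀)
    (Q : Set (Fin n → ℝ)) (hQ : IsDyadic n Q) (hQQ₀ : Q ⊆ Q₀) :
    (∑' R : {R : Set (Fin n → ℝ) // R ∈ stoppingFamily μ f r Q₀ ∧ R ⊆ Q},
        μ (R : Set (Fin n → ℝ))) ≤ ENNReal.ofReal (r / (r - 1)) * μ Q :=
  stoppingFamily_carleson_general μ f r hr Q₀ hQ₀ Q hQ
end
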